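/- Let Γ be a finite tree with vertex weights w(v) ∈ ℤ_{<0} satisfying −w(v) ≥ ν(v) for every vertex v, where ν(v) is the valence of v (Spivakovsky's characterization of minimal singularity graphs). Then the associated intersection matrix M, with M_{vv} = w(v) and M_{vw} = 1 if v,w are adjacent and 0 otherwise, is negative definite. -/

import Mathlib

open Matrix

/-! The intersection matrix is `diagonal (w + ν) - L`, with `L` the graph Laplacian. Both
summands of the quadratic form are `≤ 0` because `w + ν ≤ 0` and `L` is positive semidefinite.
If the form vanishes at `x`, then `xᵀ L x = 0` forces `x` to be constant on the connected
graph, and the diagonal term at the vertex where `w + ν < 0` forces that constant to be `0`. -/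

namespace SimpleGraph

variable {V : Type*} [Fintype V] [DecidableEq V] (G : SimpleGraph V) [DecidableRel G.Adj]

theorem of_ite_adj_eq_diagonal_sub_lapMatrix {R : Type*} [Ring R] (w : V → R) :
    (Matrix.of fun v u : V => if v = u then w v else if G.Adj v u then 1 else 0) =
      diagonal (fun v => w v + G.degree v) - G.lapMatrix R := by
  ext v u
  by_cases h : v = u
  · subst h
    simp [lapMatrix, degMatrix]
  · simp [h, lapMatrix, degMatrix, adjMatrix]

theorem eq_of_dotProduct_lapMatrix_mulVec_eq_zero (hG : G.Connected) {x : V → ℝ}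
    (hx : x ⬝ᵥ G.lapMatrix ℝ *ᵥ x = 0) (i j : V) : x i = x j := by
  rw [← toLinearMap₂'_apply', lapMatrix_toLinearMap₂'_apply'_eq_zero_iff_forall_reachable] at hx
  exact hx i j (hG i j)

theorem dotProduct_diagonal_sub_lapMatrix_mulVec_neg (hG : G.Connected) {d : V → ℝ}
    (hd : ∀ v, d v ≤ 0) (hd' : ∃ v, d v < 0) {x : V → ℝ} (hx : x ≠ 0) :
    x ⬝ᵥ (diagonal d - G.lapMatrix ℝ) *ᵥ x < 0 := by
  have hterm : ∀ v, d v * x v ^ 2 ≤ 0 := fun v =>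
    mul_nonpos_of_nonpos_of_nonneg (hd v) (sq_nonneg _)
  have hdiag : x ⬝ᵥ diagonal d *ᵥ x = ∑ v, d v * x v ^ 2 := by
    simp only [dotProduct, mulVec_diagonal]
    exact Finset.sum_congr rfl fun v _ => by ring
  have hsum : ∑ v, d v * x v ^ 2 ≤ 0 := Finset.sum_nonpos fun v _ => hterm v
  have hlap : 0 ≤ x ⬝ᵥ G.lapMatrix ℝ *ᵥ x := by
    simpa using (G.posSemidef_lapMatrix ℝ).dotProduct_mulVec_nonneg x
  rw [sub_mulVec, dotProduct_sub, hdiag]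
  by_contra! hge
  have hconst := G.eq_of_dotProduct_lapMatrix_mulVec_eq_zero hG (x := x) (by linarith)
  have hzero := (Finset.sum_eq_zero_iff_of_nonpos fun v _ => hterm v).mp (by linarith)
  obtain ⟨v₀, hv₀⟩ := hd'
  have hx₀ : x v₀ = 0 := by
    simpa [hv₀.ne] using hzero v₀ (Finset.mem_univ v₀)
  exact hx (funext fun v => (hconst v v₀).trans hx₀)

end SimpleGraph

theorem stmt6_general {V : Type*} [Fintype V] [DecidableEq V]
    (G : SimpleGraph V) [DecidableRel G.Adj] (hT : G.IsTree)
    (w : V → ℤ)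
    (hw : ∀ v, (G.degree v : ℤ) ≤ -w v)
    (hstrict : ∃ v, (G.degree v : ℤ) < -w v) :
    ∀ x : V → ℝ, x ≠ 0 →
      x ⬝ᵥ (Matrix.of fun v u : V =>
        if v = u then (w v : ℝ) else if G.Adj v u then 1 else 0).mulVec x < 0 := by
  intro x hx
  rw [G.of_ite_adj_eq_diagonal_sub_lapMatrix]
  refine G.dotProduct_diagonal_sub_lapMatrix_mulVec_neg hT.1 (fun v => ?_) ?_ hx
  · exact_mod_cast (by linarith [hw v] : w v + (G.degree v : ℤ) ≤ 0)
  · obtain ⟨v, hv⟩ := hstrict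
    exact ⟨v, by exact_mod_cast (by linarith : w v + (G.degree v : ℤ) < 0)⟩

/-- Let `Γ` be a finite connected tree with integer vertex weights
`w(v) ≤ -1` satisfying `-w(v) ≥ ν(v)` (valence) for every vertex, with strict
inequality at some vertex (Spivakovsky's characterization of minimal singularity
graphs). Then the associated intersection matrix `M` (with `M_{vv} = w(v)`,
`M_{vw} = 1` if `v ~ w`, else `0`) is negative definite: `xᵀ M x < 0` for every
nonzero real vector `x`. -/
theorem stmt6 {V : Type*} [Fintype V] [DecidableEq V]
    (G : SimpleGraph V) [DecidableRel G.Adj] (hT : G.IsTree)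
    (w : V → ℤ) (hneg : ∀ v, w v < 0)
    (hw : ∀ v, (G.degree v : ℤ) ≤ -w v)
    (hstrict : ∃ v, (G.degree v : ℤ) < -w v) :
    ∀ x : V → ℝ, x ≠ 0 →
      x ⬝ᵥ (Matrix.of fun v u : V =>
        if v = u then (w v : ℝ) else if G.Adj v u then 1 else 0).mulVec x < 0 :=
  stmt6_general G hT w hw hstrict
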